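/- Let 1 ≤ j ≤ n be integers. Then for every v ∈ ℂ, Σ_{k=j}^{n} (−1)^{k+n} (2n/(n+k)) binom(n+k, n−k) binom(2k, k−j) v^k = v^j [ P_{n−j}^{(0,2j)}(2v−1) − P_{n−1−j}^{(0,2j)}(2v−1) ], with the convention P_{−1}^{(0,2j)} := 0. -/

import Mathlib

/-!
Both sides are polynomials in `v`; compare coefficients. Putting `x = 2v - 1` into the
hypergeometric sum and re-expanding `(1 - v)^k` in powers of `v`, the inner sums are forward
differences of `x ↦ C(x, R)`, so the coefficient of `v^i` in `P_m^{(0,b)}(2v - 1)` is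
`(-1)^(m+i) C(m,i) C(m+b+i,m) = (-1)^(m+i) C(m+b+i, m-i) C(b+2i, i)`.
By absorption, `C(N-1, r-1) = (r/N) C(N, r)`, so the coefficients of `P_{m+1}` and `P_m` combine
with the factor `1 + (m+1-i)/(b+m+1+i) = (b+2m+2)/(b+m+1+i)`, which is `2n/(n+k)` for `b = 2j`,
`n = j+m+1`, `k = j+i`.
-/

open scoped BigOperators

/-- Pochhammer symbol `(a)_k = a(a+1)⋯(a+k-1)` over ℂ. -/
noncomputable def pochC (a : ℂ) (k : ℕ) : ℂ := ∏ i ∈ Finset.range k, (a + i)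

/-- Jacobi polynomial `P_n^{(a,b)}(x)`. -/
noncomputable def Jac (a b : ℝ) (n : ℕ) (x : ℂ) : ℂ :=
  (pochC ((a : ℂ) + 1) n / (n.factorial : ℂ)) * ∑ k ∈ Finset.range (n + 1),
    pochC (-(n : ℂ)) k * pochC ((n : ℂ) + a + b + 1) k /
      (pochC ((a : ℂ) + 1) k * (k.factorial : ℂ)) * ((1 - x) / 2) ^ k

lemma pochC_natCast_add_one (N k : ℕ) : pochC ((N : ℂ) + 1) k = (N + 1).ascFactorial k := by
  induction k with
  | zero => simp [pochC]
  | succ k ih =>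
    rw [pochC, Finset.prod_range_succ, ← pochC, ih, Nat.ascFactorial_succ]
    push_cast
    ring

lemma pochC_one (k : ℕ) : pochC 1 k = k.factorial := by
  simpa using pochC_natCast_add_one 0 k

lemma pochC_neg_natCast (m k : ℕ) : pochC (-(m : ℂ)) k = (-1) ^ k * m.descFactorial k := by
  induction k with
  | zero => simp [pochC]
  | succ k ih =>
    rw [pochC, Finset.prod_range_succ, ← pochC, ih, Nat.descFactorial_succ]
    rcases le_or_gt k m with hk | hk
    · push_cast [Nat.cast_sub hk]
      ring
    · simp [Nat.descFactorial_eq_zero_iff_lt.mpr hk]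

lemma jac_zero_natCast_eq_sum (b m : ℕ) (x : ℂ) :
    Jac 0 b m x = ∑ k ∈ Finset.range (m + 1),
      (-1) ^ k * (m.choose k : ℂ) * ((m + b + k).choose k : ℂ) * ((1 - x) / 2) ^ k := by
  have hm : (m.factorial : ℂ) ≠ 0 := by exact_mod_cast m.factorial_ne_zero
  simp only [Jac, Complex.ofReal_zero, zero_add, add_zero, Complex.ofReal_natCast, pochC_one,
    div_self hm, one_mul]
  refine Finset.sum_congr rfl fun k _ => ?_
  have hk : (k.factorial : ℂ) ≠ 0 := by exact_mod_cast k.factorial_ne_zero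
  rw [pochC_neg_natCast, ← Nat.cast_add, pochC_natCast_add_one,
    Nat.descFactorial_eq_factorial_mul_choose, Nat.ascFactorial_eq_factorial_mul_choose]
  push_cast
  field_simp

lemma sum_range_neg_one_pow_mul_choose_mul_choose_add (M N R : ℕ) (h : M ≤ R) :
    ∑ s ∈ Finset.range (M + 1), (-1 : ℤ) ^ (M - s) * M.choose s * (N + s).choose R =
      N.choose (R - M) := by
  have := fwdDiff_iter_eq_sum_shift 1 (fun x ↦ (x.choose (M + (R - M)) : ℤ)) M N
  rw [fwdDiff_iter_choose, Nat.add_sub_cancel' h] at this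
  simpa using this.symm

lemma neg_one_pow_add_eq_mul_neg_one_pow_sub (i s d : ℕ) (hs : s ≤ d) :
    (-1 : ℤ) ^ (i + s) = (-1) ^ (i + d) * (-1) ^ (d - s) := by
  obtain ⟨t, rfl⟩ := Nat.exists_eq_add_of_le hs
  rw [Nat.add_sub_cancel_left, ← add_assoc, pow_add _ (i + s), mul_assoc, ← mul_pow]
  simp

lemma sum_range_neg_one_pow_mul_choose_mul_choose_mul_choose (b m i : ℕ) (hi : i ≤ m) :
    ∑ k ∈ Finset.range (m + 1),
        (-1 : ℤ) ^ k * m.choose k * (m + b + k).choose k * k.choose i =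
      (-1) ^ m * m.choose i * (m + b + i).choose m := by
  obtain ⟨d, rfl⟩ := Nat.exists_eq_add_of_le hi
  have hlow : ∀ k ∈ Finset.range i,
      (-1 : ℤ) ^ k * (i + d).choose k * (i + d + b + k).choose k * k.choose i = 0 :=
    fun k hk ↦ by simp [Nat.choose_eq_zero_of_lt (Finset.mem_range.mp hk)]
  rw [show i + d + 1 = i + (d + 1) by ring, Finset.sum_range_add, Finset.sum_eq_zero hlow,
    zero_add]
  have hterm : ∀ s ∈ Finset.range (d + 1),
      (-1 : ℤ) ^ (i + s) * (i + d).choose (i + s) * (i + d + b + (i + s)).choose (i + s) *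
          (i + s).choose i =
        (-1) ^ (i + d) * (i + d).choose i *
          ((-1) ^ (d - s) * d.choose s * (i + d + b + i + s).choose (i + d + b)) := by
    intro s hs
    have hs : s ≤ d := Nat.lt_succ_iff.mp (Finset.mem_range.mp hs)
    have hmul :
        ((i + d).choose (i + s) * (i + s).choose i : ℤ) = (i + d).choose i * d.choose s := by
      exact_mod_cast by simpa using Nat.choose_mul (n := i + d) (k := i + s) (s := i) (by omega)
    rw [show i + d + b + (i + s) = i + d + b + i + s by ring,
      Nat.choose_symm_of_eq_add (show i + d + b + i + s = i + s + (i + d + b) by ring),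
      neg_one_pow_add_eq_mul_neg_one_pow_sub i s d hs]
    linear_combination ((-1) ^ (i + d) * (-1) ^ (d - s) *
      ((i + d + b + i + s).choose (i + d + b) : ℤ)) * hmul
  rw [Finset.sum_congr rfl hterm, ← Finset.mul_sum,
    sum_range_neg_one_pow_mul_choose_mul_choose_add d _ _ (by omega),
    Nat.choose_symm_of_eq_add (show i + d + b + i = i + d + (i + d + b - d) by omega)]

lemma one_sub_pow_eq_sum_range {R : Type*} [CommRing R] (v : R) {k m : ℕ} (hk : k ≤ m) :
    (1 - v) ^ k = ∑ i ∈ Finset.range (m + 1), (-1) ^ i * (k.choose i : R) * v ^ i := by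
  rw [sub_eq_neg_add, add_pow]
  refine Finset.sum_subset (Finset.range_subset_range.mpr (by omega)) (fun i _ hi ↦ ?_)
    |>.trans (Finset.sum_congr rfl fun i _ ↦ ?_)
  · simp [Nat.choose_eq_zero_of_lt (by simpa using hi : k < i)]
  · rw [neg_pow, one_pow]
    ring

lemma jac_zero_natCast_two_mul_sub_one (b m : ℕ) (v : ℂ) :
    Jac 0 b m (2 * v - 1) = ∑ i ∈ Finset.range (m + 1),
      (-1) ^ (m + i) * (m.choose i : ℂ) * ((m + b + i).choose m : ℂ) * v ^ i := by
  rw [jac_zero_natCast_eq_sum, show (1 - (2 * v - 1)) / 2 = 1 - v by ring]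
  calc _ = ∑ k ∈ Finset.range (m + 1), ∑ i ∈ Finset.range (m + 1),
        (((-1) ^ k * m.choose k * (m + b + k).choose k * k.choose i : ℤ) : ℂ) *
          ((-1) ^ i * v ^ i) :=
        Finset.sum_congr rfl fun k hk ↦ by
          rw [one_sub_pow_eq_sum_range v (Nat.lt_succ_iff.mp (Finset.mem_range.mp hk)),
            Finset.mul_sum]
          refine Finset.sum_congr rfl fun i _ ↦ ?_
          push_cast
          ring
    _ = ∑ i ∈ Finset.range (m + 1), ((∑ k ∈ Finset.range (m + 1),
        (-1) ^ k * m.choose k * (m + b + k).choose k * k.choose i : ℤ) : ℂ) *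
          ((-1) ^ i * v ^ i) := by
        rw [Finset.sum_comm]
        simp only [Int.cast_sum, Finset.sum_mul]
    _ = _ := Finset.sum_congr rfl fun i hi ↦ by
        rw [sum_range_neg_one_pow_mul_choose_mul_choose_mul_choose b m i
          (Nat.lt_succ_iff.mp (Finset.mem_range.mp hi))]
        push_cast
        ring

lemma choose_mul_choose_add_eq (b m i : ℕ) (hi : i ≤ m) :
    m.choose i * (m + b + i).choose m = (m + b + i).choose (m - i) * (b + 2 * i).choose i := by
  have h := Nat.choose_mul (n := m + b + i) (k := m) (s := m - i) (by omega)
  rw [Nat.choose_symm hi, show m + b + i - (m - i) = b + 2 * i by omega,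
    show m - (m - i) = i by omega] at h
  rw [mul_comm, h]

lemma choose_mul_choose_add_choose_mul_choose_mul_eq (b m i : ℕ) (hi : i ≤ m + 1) :
    ((m + 1).choose i * (m + 1 + b + i).choose (m + 1) + m.choose i * (m + b + i).choose m) *
        (b + m + 1 + i) =
      (b + 2 * m + 2) * ((b + m + 1 + i).choose (m + 1 - i) * (b + 2 * i).choose i) := by
  rw [choose_mul_choose_add_eq b (m + 1) i hi, show m + 1 + b + i = b + m + 1 + i by ring]
  rcases hi.lt_or_eq with hi | rfl
  · obtain ⟨d, rfl⟩ := Nat.exists_eq_add_of_le (Nat.lt_succ_iff.mp hi)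
    have habsorb := Nat.add_one_mul_choose_eq (b + 2 * i + d) d
    rw [choose_mul_choose_add_eq b (i + d) i (by omega), show i + d + 1 - i = d + 1 by omega,
      show i + d - i = d by omega, show i + d + b + i = b + 2 * i + d by ring,
      show b + (i + d) + 1 + i = b + 2 * i + d + 1 by ring]
    calc _ = ((b + 2 * i + d + 1).choose (d + 1) * (b + 2 * i + d + 1) +
          (b + 2 * i + d + 1) * (b + 2 * i + d).choose d) * (b + 2 * i).choose i := by ring
      _ = _ := by rw [habsorb]; ring
  · rw [Nat.choose_succ_self, Nat.sub_self, Nat.choose_zero_right]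
    ring

lemma jac_zero_natCast_succ_sub (b m : ℕ) (v : ℂ) :
    Jac 0 b (m + 1) (2 * v - 1) - Jac 0 b m (2 * v - 1) = ∑ i ∈ Finset.range (m + 2),
      (-1) ^ (m + 1 + i) * (((b + 2 * m + 2 : ℕ) : ℂ) / ((b + m + 1 + i : ℕ) : ℂ)) *
        ((b + m + 1 + i).choose (m + 1 - i) : ℂ) * ((b + 2 * i).choose i : ℂ) * v ^ i := by
  have hext : ∑ i ∈ Finset.range (m + 1),
      (-1) ^ (m + i) * (m.choose i : ℂ) * ((m + b + i).choose m : ℂ) * v ^ i =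
      ∑ i ∈ Finset.range (m + 2),
      (-1) ^ (m + i) * (m.choose i : ℂ) * ((m + b + i).choose m : ℂ) * v ^ i := by
    simp [Finset.sum_range_succ _ (m + 1)]
  rw [jac_zero_natCast_two_mul_sub_one b (m + 1), jac_zero_natCast_two_mul_sub_one b m, hext,
    ← Finset.sum_sub_distrib]
  refine Finset.sum_congr rfl fun i hi ↦ ?_
  have hN : ((b + m + 1 + i : ℕ) : ℂ) ≠ 0 := by
    exact_mod_cast (by omega : b + m + 1 + i ≠ 0)
  have key := congrArg (Nat.cast : ℕ → ℂ) <|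
    choose_mul_choose_add_choose_mul_choose_mul_eq b m i
      (Nat.lt_succ_iff.mp (Finset.mem_range.mp hi))
  rw [Nat.cast_mul, ← eq_div_iff hN] at key
  push_cast at key ⊢
  rw [show m + 1 + i = m + i + 1 by ring, pow_succ]
  linear_combination (-(-1) ^ (m + i) * v ^ i) * key

lemma jac_degree_zero (a b : ℝ) (x : ℂ) : Jac a b 0 x = 1 := by
  simp [Jac, pochC]

theorem stmt14 (j n : ℕ) (hj : 1 ≤ j) (hjn : j ≤ n) (v : ℂ) :
    ∑ k ∈ Finset.Icc j n, (-1 : ℂ) ^ (k + n) * (2 * n / ((n : ℂ) + k)) *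
        ((n + k).choose (n - k) : ℂ) * ((2 * k).choose (k - j) : ℂ) * v ^ k =
      v ^ j * (Jac 0 (2 * j) (n - j) (2 * v - 1) -
        (if j < n then Jac 0 (2 * j) (n - 1 - j) (2 * v - 1) else 0)) := by
  obtain ⟨m, rfl⟩ := Nat.exists_eq_add_of_le hjn
  rcases m with _ | m
  · have hj0 : (j : ℂ) ≠ 0 := by exact_mod_cast (by omega : j ≠ 0)
    simp only [add_zero, Finset.Icc_self, Finset.sum_singleton, Even.add_self, Even.neg_pow,
      one_pow, one_mul, tsub_self, Nat.choose_zero_right, Nat.cast_one, mul_one, jac_degree_zero,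
      lt_self_iff_false, ↓reduceIte, sub_zero]
    rw [← two_mul, div_self (mul_ne_zero two_ne_zero hj0), one_mul]
  · rw [if_pos (by omega), show j + (m + 1) - j = m + 1 by omega,
      show j + (m + 1) - 1 - j = m by omega,
      show (2 * j : ℝ) = ((2 * j : ℕ) : ℝ) by push_cast; ring,
      jac_zero_natCast_succ_sub, Finset.mul_sum, ← Finset.Ico_add_one_right_eq_Icc,
      Finset.sum_Ico_eq_sum_range, show j + (m + 1) + 1 - j = m + 2 by omega]
    refine Finset.sum_congr rfl fun i _ ↦ ?_
    rw [show j + (m + 1) + (j + i) = 2 * j + m + 1 + i by ring,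
      show j + (m + 1) - (j + i) = m + 1 - i by omega, show j + i - j = i by omega,
      show 2 * (j + i) = 2 * j + 2 * i by ring,
      show j + i + (j + (m + 1)) = 2 * j + (m + 1 + i) by ring, pow_add _ (2 * j), pow_mul,
      neg_one_sq, one_pow, one_mul]
    push_cast
    ring
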